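/- arXiv:2508.02716 — 3 statements merged into one kernel-verified Lean document; each statement's English description precedes it below -/
import Mathlib

section
/- Every α ∈ (E₆,ℝ)^C with τ∘α∘τ = α maps the real subspace J(3,ℝ) of real symmetric 3×3 matrices into itself, and the restriction map α ↦ α|_{J(3,ℝ)} is a group isomorphism from {α ∈ (E₆,ℝ)^C : τ∘α∘τ = α} onto E₆₍₋₂₆₎,ℝ. -/
open Matrix

noncomputable section

/-- `J(3,ℝ^C)`: the complex vector space of symmetric 3×3 complex matrices. -/
def Sym3 : Submodule ℂ (Matrix (Fin 3) (Fin 3) ℂ) where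
  carrier := {X | Xᵀ = X}
  add_mem' := fun {a b} ha hb => by
    simp only [Set.mem_setOf_eq] at *
    rw [Matrix.transpose_add, ha, hb]
  zero_mem' := by simp [Set.mem_setOf_eq]
  smul_mem' := fun c a ha => by
    simp only [Set.mem_setOf_eq] at *
    rw [Matrix.transpose_smul, ha]

/-- `J(3,ℝ)`: the real vector space of symmetric 3×3 real matrices. -/
def SymR3 : Submodule ℝ (Matrix (Fin 3) (Fin 3) ℝ) where
  carrier := {X | Xᵀ = X}
  add_mem' := fun {a b} ha hb => by
    simp only [Set.mem_setOf_eq] at *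
    rw [Matrix.transpose_add, ha, hb]
  zero_mem' := by simp [Set.mem_setOf_eq]
  smul_mem' := fun c a ha => by
    simp only [Set.mem_setOf_eq] at *
    rw [Matrix.transpose_smul, ha]

/-- `τ`, entrywise complex conjugation, as a map of `J(3,ℝ^C)`. -/
def tauSym (X : Sym3) : Sym3 :=
  ⟨(X : Matrix (Fin 3) (Fin 3) ℂ).map (starRingEnd ℂ), by
    have hX : (X : Matrix (Fin 3) (Fin 3) ℂ)ᵀ = (X : Matrix (Fin 3) (Fin 3) ℂ) := X.2
    show ((X : Matrix (Fin 3) (Fin 3) ℂ).map (starRingEnd ℂ))ᵀ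
        = (X : Matrix (Fin 3) (Fin 3) ℂ).map (starRingEnd ℂ)
    rw [← Matrix.transpose_map, hX]⟩

/-- The inclusion `J(3,ℝ) ⊆ J(3,ℝ^C)`. -/
def cplxSym (X : SymR3) : Sym3 :=
  ⟨(X : Matrix (Fin 3) (Fin 3) ℝ).map (fun r => (r : ℂ)), by
    have hX : (X : Matrix (Fin 3) (Fin 3) ℝ)ᵀ = (X : Matrix (Fin 3) (Fin 3) ℝ) := X.2
    show ((X : Matrix (Fin 3) (Fin 3) ℝ).map (fun r => (r : ℂ)))ᵀ
        = (X : Matrix (Fin 3) (Fin 3) ℝ).map (fun r => (r : ℂ))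
    rw [← Matrix.transpose_map, hX]⟩

/-- `{α ∈ (E₆,ℝ)^C : τ∘α∘τ = α}` (equivalently, `α` commutes with `τ`). -/
def E6tauSet : Set (Sym3 ≃ₗ[ℂ] Sym3) :=
  {α | (∀ X : Sym3, ((α X : Matrix (Fin 3) (Fin 3) ℂ)).det
          = ((X : Matrix (Fin 3) (Fin 3) ℂ)).det) ∧
       (∀ X : Sym3, α (tauSym X) = tauSym (α X))}

/-
A τ-fixed element of J(3,ℝ^C) has real entries, so an α commuting with τ maps J(3,ℝ) into
itself, and α is recovered from its restriction through X = Re X + i Im X. Conversely, the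
ℂ-linear extension A + iB ↦ γA + iγB of any ℝ-linear γ of J(3,ℝ) commutes with τ; if γ
preserves det, so does its extension, because det (γA + z γB) - det (A + z B) is a polynomial
in z that vanishes on ℝ.
-/

local notation "MC" => Matrix (Fin 3) (Fin 3) ℂ
local notation "MR" => Matrix (Fin 3) (Fin 3) ℝ

section Pencil

open Polynomial

variable {n : Type*} [Fintype n] [DecidableEq n]

lemma eval_det_map_C_add_X_smul {R : Type*} [CommRing R] (P Q : Matrix n n R) (z : R) :
    (P.map C + (X : R[X]) • Q.map C).det.eval z = (P + z • Q).det := by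
  rw [← coe_evalRingHom, RingHom.map_det]
  congr 1
  ext i j
  simp only [RingHom.mapMatrix_apply, map_apply, Matrix.add_apply, Matrix.smul_apply,
    coe_evalRingHom, eval_add, smul_eq_mul, eval_mul, eval_X, eval_C]

-- `det (P + z • Q)` is a polynomial in `z`, hence determined by its values at real `z`.
lemma det_add_smul_eq_of_forall_real {P Q P' Q' : Matrix n n ℂ}
    (h : ∀ r : ℝ, (P + (r : ℂ) • Q).det = (P' + (r : ℂ) • Q').det) (z : ℂ) :
    (P + z • Q).det = (P' + z • Q').det := by
  set p := (P.map C + (X : ℂ[X]) • Q.map C).det - (P'.map C + (X : ℂ[X]) • Q'.map C).det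
  have hroots (r : ℝ) : p.IsRoot r := by
    simp only [p, IsRoot, eval_sub, eval_det_map_C_add_X_smul, h r, sub_self]
  have hp : p = 0 := eq_zero_of_infinite_isRoot p <|
    (Set.infinite_range_of_injective Complex.ofReal_injective).mono (Set.range_subset_iff.2 hroots)
  simpa [p, eval_det_map_C_add_X_smul, sub_eq_zero] using congrArg (eval z) hp

end Pencil

@[ext]
lemma Sym3.ext {X Y : Sym3} (h : ∀ i j, (X : MC) i j = (Y : MC) i j) : X = Y :=
  Subtype.ext (Matrix.ext h)

@[ext]
lemma SymR3.ext {X Y : SymR3} (h : ∀ i j, (X : MR) i j = (Y : MR) i j) : X = Y :=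
  Subtype.ext (Matrix.ext h)

section RealForm

@[simp]
lemma cplxSym_apply (X : SymR3) (i j : Fin 3) : (cplxSym X : MC) i j = ((X : MR) i j : ℂ) := rfl

@[simp]
lemma tauSym_apply (X : Sym3) (i j : Fin 3) :
    (tauSym X : MC) i j = starRingEnd ℂ ((X : MC) i j) := rfl

lemma cplxSym_injective : Function.Injective cplxSym := fun X Y h =>
  SymR3.ext fun i j =>
    Complex.ofReal_injective (by simpa using congrArg (fun Z : Sym3 => (Z : MC) i j) h)

@[simp]
lemma cplxSym_add (X Y : SymR3) : cplxSym (X + Y) = cplxSym X + cplxSym Y := by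
  ext; simp

@[simp]
lemma cplxSym_smul (c : ℝ) (X : SymR3) : cplxSym (c • X) = (c : ℂ) • cplxSym X := by
  ext; simp

@[simp]
lemma tauSym_cplxSym (X : SymR3) : tauSym (cplxSym X) = cplxSym X := by
  ext; simp

lemma det_cplxSym (X : SymR3) : (cplxSym X : MC).det = ((X : MR).det : ℂ) :=
  (Complex.ofRealHom.map_det (X : MR)).symm

def symRe (X : Sym3) : SymR3 :=
  ⟨(X : MC).map Complex.re, (show (X : MC).IsSymm from X.2).map _⟩

def symIm (X : Sym3) : SymR3 :=
  ⟨(X : MC).map Complex.im, (show (X : MC).IsSymm from X.2).map _⟩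

@[simp]
lemma symRe_apply (X : Sym3) (i j : Fin 3) : (symRe X : MR) i j = ((X : MC) i j).re := rfl

@[simp]
lemma symIm_apply (X : Sym3) (i j : Fin 3) : (symIm X : MR) i j = ((X : MC) i j).im := rfl

def ofReIm (A B : SymR3) : Sym3 := cplxSym A + Complex.I • cplxSym B

@[simp]
lemma ofReIm_apply (A B : SymR3) (i j : Fin 3) :
    (ofReIm A B : MC) i j = ⟨(A : MR) i j, (B : MR) i j⟩ := by
  apply Complex.ext <;> simp [ofReIm]

@[simp]
lemma ofReIm_symRe_symIm (X : Sym3) : ofReIm (symRe X) (symIm X) = X := by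
  ext; simp

@[simp]
lemma symRe_ofReIm (A B : SymR3) : symRe (ofReIm A B) = A := by
  ext; simp

@[simp]
lemma symIm_ofReIm (A B : SymR3) : symIm (ofReIm A B) = B := by
  ext; simp

@[simp]
lemma symRe_add (X Y : Sym3) : symRe (X + Y) = symRe X + symRe Y := by
  ext; simp

@[simp]
lemma symIm_add (X Y : Sym3) : symIm (X + Y) = symIm X + symIm Y := by
  ext; simp

lemma symRe_smul (c : ℂ) (X : Sym3) : symRe (c • X) = c.re • symRe X - c.im • symIm X := by
  ext; simp

lemma symIm_smul (c : ℂ) (X : Sym3) : symIm (c • X) = c.re • symIm X + c.im • symRe X := by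
  ext; simp

lemma symRe_tauSym (X : Sym3) : symRe (tauSym X) = symRe X := by
  ext; simp

lemma symIm_tauSym (X : Sym3) : symIm (tauSym X) = -symIm X := by
  ext; simp

lemma cplxSym_symRe_of_tauSym_eq {X : Sym3} (h : tauSym X = X) : cplxSym (symRe X) = X := by
  ext i j
  have hij : starRingEnd ℂ ((X : MC) i j) = (X : MC) i j := by
    simpa using congrArg (fun Z : Sym3 => (Z : MC) i j) h
  simpa using Complex.conj_eq_iff_re.mp hij

end RealForm

section Restriction

variable {α : Sym3 ≃ₗ[ℂ] Sym3}

def restrictReal (α : Sym3 ≃ₗ[ℂ] Sym3) (X : SymR3) : SymR3 := symRe (α (cplxSym X))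

lemma cplxSym_restrictReal (hα : ∀ X, α (tauSym X) = tauSym (α X)) (X : SymR3) :
    cplxSym (restrictReal α X) = α (cplxSym X) :=
  cplxSym_symRe_of_tauSym_eq (by rw [← hα, tauSym_cplxSym])

lemma symm_comm_tauSym (hα : ∀ X, α (tauSym X) = tauSym (α X)) (X : Sym3) :
    α.symm (tauSym X) = tauSym (α.symm X) :=
  α.injective (by rw [hα, LinearEquiv.apply_symm_apply, LinearEquiv.apply_symm_apply])

def restrictRealEquiv (α : Sym3 ≃ₗ[ℂ] Sym3) (hα : ∀ X, α (tauSym X) = tauSym (α X)) :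
    SymR3 ≃ₗ[ℝ] SymR3 where
  toFun := restrictReal α
  invFun := restrictReal α.symm
  map_add' X Y := cplxSym_injective <| by simp [cplxSym_restrictReal hα]
  map_smul' c X := cplxSym_injective <| by simp [cplxSym_restrictReal hα]
  left_inv X := cplxSym_injective <| by
    simp [cplxSym_restrictReal hα, cplxSym_restrictReal (symm_comm_tauSym hα)]
  right_inv X := cplxSym_injective <| by
    simp [cplxSym_restrictReal hα, cplxSym_restrictReal (symm_comm_tauSym hα)]

@[simp]
lemma restrictRealEquiv_apply (hα : ∀ X, α (tauSym X) = tauSym (α X)) (X : SymR3) :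
    restrictRealEquiv α hα X = restrictReal α X := rfl

lemma apply_eq_ofReIm_restrictReal (hα : ∀ X, α (tauSym X) = tauSym (α X)) (X : Sym3) :
    α X = ofReIm (restrictReal α (symRe X)) (restrictReal α (symIm X)) := by
  conv_lhs => rw [← ofReIm_symRe_symIm X]
  simp [ofReIm, cplxSym_restrictReal hα]

lemma det_restrictReal (hα : ∀ X, α (tauSym X) = tauSym (α X))
    (hdet : ∀ X : Sym3, (α X : MC).det = (X : MC).det) (X : SymR3) :
    (restrictReal α X : MR).det = (X : MR).det := by
  apply Complex.ofReal_injective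
  rw [← det_cplxSym, ← det_cplxSym, cplxSym_restrictReal hα, hdet]

end Restriction

section Complexification

lemma ofReIm_add (A B A' B' : SymR3) : ofReIm A B + ofReIm A' B' = ofReIm (A + A') (B + B') := by
  ext; apply Complex.ext <;> simp

lemma smul_ofReIm (c : ℂ) (A B : SymR3) :
    c • ofReIm A B = ofReIm (c.re • A - c.im • B) (c.re • B + c.im • A) := by
  ext; apply Complex.ext <;> simp

lemma ofReIm_zero_right (A : SymR3) : ofReIm A 0 = cplxSym A := by
  ext; apply Complex.ext <;> simp

lemma tauSym_ofReIm (A B : SymR3) : tauSym (ofReIm A B) = ofReIm A (-B) := by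
  ext; apply Complex.ext <;> simp

lemma coe_ofReIm (A B : SymR3) :
    (ofReIm A B : MC) = (cplxSym A : MC) + Complex.I • (cplxSym B : MC) := rfl

def complexify (γ : SymR3 →ₗ[ℝ] SymR3) (X : Sym3) : Sym3 :=
  ofReIm (γ (symRe X)) (γ (symIm X))

variable (γ : SymR3 →ₗ[ℝ] SymR3)

@[simp]
lemma complexify_ofReIm (A B : SymR3) : complexify γ (ofReIm A B) = ofReIm (γ A) (γ B) := by
  simp [complexify]

lemma complexify_add (X Y : Sym3) : complexify γ (X + Y) = complexify γ X + complexify γ Y := by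
  simp only [complexify, symRe_add, symIm_add, map_add, ofReIm_add]

lemma complexify_smul (c : ℂ) (X : Sym3) : complexify γ (c • X) = c • complexify γ X := by
  simp only [complexify, symRe_smul, symIm_smul, map_add, map_sub, map_smul, smul_ofReIm]

lemma complexify_cplxSym (X : SymR3) : complexify γ (cplxSym X) = cplxSym (γ X) := by
  rw [← ofReIm_zero_right, complexify_ofReIm, map_zero, ofReIm_zero_right]

lemma complexify_tauSym (X : Sym3) : complexify γ (tauSym X) = tauSym (complexify γ X) := by
  simp only [complexify, symRe_tauSym, symIm_tauSym, map_neg, tauSym_ofReIm]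

lemma det_complexify (hγ : ∀ X : SymR3, (γ X : MR).det = (X : MR).det) (X : Sym3) :
    (complexify γ X : MC).det = (X : MC).det := by
  rw [← ofReIm_symRe_symIm X, complexify_ofReIm, coe_ofReIm, coe_ofReIm]
  refine det_add_smul_eq_of_forall_real (fun r => ?_) _
  have hcoe (A B : SymR3) :
      (cplxSym A : MC) + (r : ℂ) • (cplxSym B : MC) = cplxSym (A + r • B) := by
    simp
  rw [hcoe, hcoe, det_cplxSym, det_cplxSym, ← map_smul, ← map_add, hγ]

def complexifyEquiv (γ : SymR3 ≃ₗ[ℝ] SymR3) : Sym3 ≃ₗ[ℂ] Sym3 where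
  toFun := complexify γ
  invFun := complexify γ.symm
  map_add' := complexify_add γ
  map_smul' := complexify_smul γ
  left_inv X := by simp [complexify]
  right_inv X := by simp [complexify]

@[simp]
lemma complexifyEquiv_apply (γ : SymR3 ≃ₗ[ℝ] SymR3) (X : Sym3) :
    complexifyEquiv γ X = complexify γ X := rfl

lemma complexifyEquiv_tauSym (γ : SymR3 ≃ₗ[ℝ] SymR3) (X : Sym3) :
    complexifyEquiv γ (tauSym X) = tauSym (complexifyEquiv γ X) :=
  complexify_tauSym γ X

lemma restrictRealEquiv_complexifyEquiv (γ : SymR3 ≃ₗ[ℝ] SymR3) :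
    restrictRealEquiv (complexifyEquiv γ) (complexifyEquiv_tauSym γ) = γ :=
  LinearEquiv.ext fun X => cplxSym_injective <| by
    rw [restrictRealEquiv_apply, cplxSym_restrictReal (complexifyEquiv_tauSym γ),
      complexifyEquiv_apply, complexify_cplxSym]
    rfl

end Complexification

/-- every `α ∈ (E₆,ℝ)^C` with `τατ = α` maps `J(3,ℝ)` into itself, and the
restriction map is a group isomorphism from `{α ∈ (E₆,ℝ)^C : τατ = α}` onto `E₆₍₋₂₆₎,ℝ`,
the group of ℝ-linear det-preserving automorphisms of `J(3,ℝ)`. -/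
theorem stmt_4 :
    (∀ α ∈ E6tauSet, ∀ X : Sym3, tauSym X = X → tauSym (α X) = α X) ∧
    (∃ Φ : E6tauSet → (SymR3 ≃ₗ[ℝ] SymR3),
      (∀ (α : E6tauSet) (X : SymR3),
        (((Φ α) X : Matrix (Fin 3) (Fin 3) ℝ)).map (fun r => (r : ℂ))
          = (α.val (cplxSym X) : Matrix (Fin 3) (Fin 3) ℂ)) ∧
      (∀ (α β : E6tauSet) (h : α.val * β.val ∈ E6tauSet),
        Φ ⟨α.val * β.val, h⟩ = Φ α * Φ β) ∧
      Function.Injective Φ ∧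
      (∀ γ : SymR3 ≃ₗ[ℝ] SymR3,
        (∀ X : SymR3, ((γ X : Matrix (Fin 3) (Fin 3) ℝ)).det
            = ((X : Matrix (Fin 3) (Fin 3) ℝ)).det) ↔ ∃ α, Φ α = γ)) := by
  refine ⟨fun α hα X hX => by rw [← hα.2, hX], fun α => restrictRealEquiv α.1 α.2.2,
    fun α X => congrArg Subtype.val (cplxSym_restrictReal α.2.2 X), ?_, ?_, ?_⟩
  · intro α β h
    refine LinearEquiv.ext fun X => cplxSym_injective ?_
    simp [cplxSym_restrictReal α.2.2, cplxSym_restrictReal β.2.2, cplxSym_restrictReal h.2]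
  · intro α β h
    have hrestr : restrictReal α.1 = restrictReal β.1 := congrArg DFunLike.coe h
    refine Subtype.ext (LinearEquiv.ext fun X => ?_)
    rw [apply_eq_ofReIm_restrictReal α.2.2, apply_eq_ofReIm_restrictReal β.2.2, hrestr]
  · intro γ
    refine ⟨fun hγ => ⟨⟨complexifyEquiv γ, det_complexify _ hγ, complexifyEquiv_tauSym γ⟩,
      restrictRealEquiv_complexifyEquiv γ⟩, ?_⟩
    rintro ⟨α, rfl⟩
    exact det_restrictReal α.2.2 α.2.1
end
end

section
/- The map SL(3,ℝ) → E₆₍₋₂₆₎,ℝ sending A to the transformation X ↦ A·X·ᵗA is well defined and is a group isomorphism; in particular E₆₍₋₂₆₎,ℝ ≅ SL(3,ℝ). -/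
/-
Injectivity: if `A X Aᵀ = X` for every symmetric `X`, then `X = 1` makes `A` orthogonal, so `A`
commutes with all symmetric matrices and is scalar; `det A = 1` forces `A = 1`.

Surjectivity: let `α` preserve `det`. Polarizing `det (X + t Y)` shows that `α` preserves the
pairing `tr (adj X * Y)`; as the trace form is definite on symmetric matrices, `α` maps matrices
with `adj X = 0`, i.e. `±v vᵀ`, to matrices of the same kind. Writing `α Eᵢᵢ = εᵢ uᵢ uᵢᵀ` and `U`
for the matrix with columns `uᵢ`, the map `β = (X ↦ U X Uᵀ)⁻¹ ∘ α` sends `Eᵢᵢ` to `εᵢ Eᵢᵢ`.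
Comparing coefficients of `det (D + Y) = det (β D + β Y)` for diagonal `D` and hollow `Y` shows
that every `εᵢ = 1` and that `β` multiplies the off-diagonal units `Eⱼₖ + Eₖⱼ` by signs `σⱼₖ`
with product `1`, so that `β` is the congruence by `diag (σ₁₂, σ₀₂, σ₀₁)`.
-/

open Matrix

noncomputable section

local notation "M₃" => Matrix (Fin 3) (Fin 3) ℝ

namespace Matrix

lemma mem_range_scalar_of_forall_isSymm_mul_mul_transpose {n K : Type*} [Fintype n]
    [DecidableEq n] [CommRing K] {A : Matrix n n K}
    (hA : ∀ X : Matrix n n K, X.IsSymm → A * X * Aᵀ = X) :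
    A ∈ Set.range (scalar n) := by
  have horth : Aᵀ * A = 1 := mul_eq_one_comm.mp (by simpa using hA 1 isSymm_one)
  have hcomm : ∀ X : Matrix n n K, X.IsSymm → Commute X A := fun X hX => by
    calc X * A = A * X * Aᵀ * A := by rw [hA X hX]
      _ = A * X := by rw [Matrix.mul_assoc, horth, Matrix.mul_one]
  refine mem_range_scalar_of_commute_single fun i j hij => ?_
  have hsymm : (single i j (1 : K) + single j i 1).IsSymm := by
    simp [IsSymm, transpose_single, add_comm]
  have : single i j (1 : K) = single i i 1 * (single i j 1 + single j i 1) := by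
    simp [Matrix.mul_add, single_mul_single_same, single_mul_single_of_ne _ i i j hij]
  change Commute (single i j 1) A
  rw [this]
  exact (hcomm _ (by simp [IsSymm, transpose_single])).mul_left (hcomm _ hsymm)

lemma det_add_smul_fin_three {R : Type*} [CommRing R] (X Y : Matrix (Fin 3) (Fin 3) R) (t : R) :
    (X + t • Y).det = X.det + t * (X.adjugate * Y).trace + t ^ 2 * (Y.adjugate * X).trace +
      t ^ 3 * Y.det := by
  simp only [det_fin_three, adjugate_fin_three, trace_fin_three, mul_apply, Fin.sum_univ_three,
    add_apply, smul_apply, smul_eq_mul, of_apply, cons_val', cons_val_zero, cons_val_one,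
    cons_val_two, empty_val', cons_val_fin_one, head_cons, tail_cons, head_fin_const]
  ring

lemma mul_single_mul_transpose {n R : Type*} [Fintype n] [DecidableEq n] [CommSemiring R]
    (M : Matrix n n R) (i : n) :
    M * single i i 1 * Mᵀ = vecMulVec (fun r => M r i) (fun r => M r i) := by
  ext r s
  simp [mul_apply, single_apply, vecMulVec_apply, ite_and]

lemma adjugate_diagonal_single_fin_three {R : Type*} [CommRing R] (i : Fin 3) :
    (diagonal (Pi.single i (1 : R))).adjugate = 0 := by
  ext a b
  fin_cases i <;> fin_cases a <;> fin_cases b <;> simp [-adjugate_diagonal, adjugate_fin_three]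

lemma det_diagonal_add_of_isSymm_of_diag_eq_zero {R : Type*} [CommRing R] (d : Fin 3 → R)
    {M : Matrix (Fin 3) (Fin 3) R} (hM : M.IsSymm) (h0 : ∀ i, M i i = 0) :
    (diagonal d + M).det = d 0 * d 1 * d 2 + 2 * M 0 1 * M 0 2 * M 1 2 - d 0 * M 1 2 ^ 2 -
      d 1 * M 0 2 ^ 2 - d 2 * M 0 1 ^ 2 := by
  simp only [det_fin_three, add_apply, diagonal_apply, h0, ← hM.apply 0 1, ← hM.apply 0 2,
    ← hM.apply 1 2, ↓reduceIte, Fin.reduceEq, add_zero, zero_add]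
  ring

/-- The entries of `adj X` are the `2 × 2` minors of `X`. -/
lemma mul_mul_eq_of_isSymm_of_adjugate_eq_zero {X : M₃} (hX : X.IsSymm)
    (h : X.adjugate = 0) (k i j : Fin 3) : X k k * X i j = X i k * X j k := by
  have hadj (i j : Fin 3) : X.adjugate i j = 0 := by rw [h, Matrix.zero_apply]
  have a00 := hadj 0 0; have a01 := hadj 0 1; have a02 := hadj 0 2
  have a11 := hadj 1 1; have a12 := hadj 1 2; have a22 := hadj 2 2
  simp only [adjugate_fin_three, of_apply, cons_val', cons_val_zero, cons_val_one, cons_val_two,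
    empty_val', cons_val_fin_one, head_cons, tail_cons, head_fin_const] at a00 a01 a02 a11 a12 a22
  have s01 := hX.apply 0 1; have s02 := hX.apply 0 2; have s12 := hX.apply 1 2
  fin_cases k <;> fin_cases i <;> fin_cases j <;> grind

lemma eq_inv_smul_vecMulVec_col {n K : Type*} [Field K] {X : Matrix n n K} {k : n}
    (hk : X k k ≠ 0) (hX : ∀ i j, X k k * X i j = X i k * X j k) :
    X = (X k k)⁻¹ • vecMulVec (fun i => X i k) (fun i => X i k) := by
  ext i j
  rw [smul_apply, vecMulVec_apply, smul_eq_mul, ← hX, inv_mul_cancel_left₀ hk]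

lemma exists_inv_smul_vecMulVec_eq {n : Type*} {a : ℝ} (ha : a ≠ 0) (c : n → ℝ) :
    ∃ (ε : ℝ) (v : n → ℝ), ε ^ 2 = 1 ∧ a⁻¹ • vecMulVec c c = ε • vecMulVec v v := by
  refine ⟨a / |a|, (√|a|)⁻¹ • c, by rw [div_pow, sq_abs, div_self (pow_ne_zero 2 ha)], ?_⟩
  have hsqrt : (√|a|)⁻¹ * (√|a|)⁻¹ = |a|⁻¹ := by
    rw [← mul_inv, Real.mul_self_sqrt (abs_nonneg a)]
  rw [smul_vecMulVec, vecMulVec_smul, smul_smul, smul_smul, mul_assoc, hsqrt]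
  congr 1
  field_simp
  rw [sq_abs]

lemma exists_eq_smul_vecMulVec_of_adjugate_eq_zero {X : M₃} (hX : X.IsSymm)
    (h : X.adjugate = 0) : ∃ (ε : ℝ) (v : Fin 3 → ℝ), ε ^ 2 = 1 ∧ X = ε • vecMulVec v v := by
  have hminor := mul_mul_eq_of_isSymm_of_adjugate_eq_zero hX h
  by_cases hdiag : ∃ k, X k k ≠ 0
  · obtain ⟨k, hk⟩ := hdiag
    rw [eq_inv_smul_vecMulVec_col hk (hminor k)]
    exact exists_inv_smul_vecMulVec_eq hk _
  · simp only [not_exists, not_not] at hdiag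
    refine ⟨1, 0, one_pow 2, ?_⟩
    ext i j
    have : X j i ^ 2 = 0 := by nlinarith [hminor i j j, hdiag i, hdiag j]
    simpa [← hX.apply i j] using this

end Matrix

namespace SymR3

lemma mem_iff {X : M₃} : X ∈ SymR3 ↔ X.IsSymm := Iff.rfl

lemma isSymm (X : SymR3) : (X : M₃).IsSymm := X.2

def congruence (M : M₃) : SymR3 →ₗ[ℝ] SymR3 where
  toFun X := ⟨M * X * Mᵀ, by
    simp only [mem_iff, IsSymm, transpose_mul, transpose_transpose, (isSymm X).eq,
      Matrix.mul_assoc]⟩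
  map_add' X Y := Subtype.ext (by simp [Matrix.mul_add, Matrix.add_mul])
  map_smul' c X := Subtype.ext (by simp)

@[simp]
lemma coe_congruence (M : M₃) (X : SymR3) : (congruence M X : M₃) = M * X * Mᵀ := rfl

lemma det_congruence (M : M₃) (X : SymR3) :
    (congruence M X : M₃).det = M.det ^ 2 * (X : M₃).det := by
  simp only [coe_congruence, det_mul, det_transpose]
  ring

def congruenceMonoidHom : M₃ →* Module.End ℝ SymR3 where
  toFun := congruence
  map_one' := LinearMap.ext fun X => Subtype.ext (by simp)
  map_mul' M N := LinearMap.ext fun X => Subtype.ext (by simp [Matrix.mul_assoc])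

def congruenceHom : SpecialLinearGroup (Fin 3) ℝ →* (SymR3 ≃ₗ[ℝ] SymR3) :=
  (LinearMap.GeneralLinearGroup.generalLinearEquiv ℝ SymR3).toMonoidHom.comp
    (congruenceMonoidHom.comp SpecialLinearGroup.coeMonoidHom).toHomUnits

lemma coe_congruenceHom_apply (A : SpecialLinearGroup (Fin 3) ℝ) (X : SymR3) :
    (congruenceHom A X : M₃) = A * (X : M₃) * (A : M₃)ᵀ :=
  rfl

lemma det_congruenceHom (A : SpecialLinearGroup (Fin 3) ℝ) (X : SymR3) :
    (congruenceHom A X : M₃).det = (X : M₃).det := by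
  rw [coe_congruenceHom_apply, ← coe_congruence, det_congruence, A.2, one_pow, one_mul]

lemma congruenceHom_injective : Function.Injective congruenceHom := by
  refine (injective_iff_map_eq_one _).mpr fun A hA => ?_
  obtain ⟨c, hc⟩ := mem_range_scalar_of_forall_isSymm_mul_mul_transpose (A := A.1)
    fun X hX => congrArg Subtype.val (LinearEquiv.congr_fun hA ⟨X, hX⟩)
  have hc3 : c ^ 3 = 1 := by simpa [← hc] using A.2
  have hc1 : c = 1 := by nlinarith [sq_nonneg (c + 1 / 2)]
  ext : 1
  rw [← hc, hc1, map_one]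
  rfl

def diagonal (d : Fin 3 → ℝ) : SymR3 := ⟨Matrix.diagonal d, isSymm_diagonal d⟩

def offDiagUnit (i j : Fin 3) : SymR3 :=
  ⟨single i j 1 + single j i 1, by simp [mem_iff, IsSymm, transpose_single, add_comm]⟩

@[simp]
lemma coe_diagonal (d : Fin 3 → ℝ) : (diagonal d : M₃) = Matrix.diagonal d := rfl

@[simp]
lemma coe_offDiagUnit (i j : Fin 3) : (offDiagUnit i j : M₃) = single i j 1 + single j i 1 :=
  rfl

lemma eq_diagonal_add (X : SymR3) :
    X = diagonal (fun i => (X : M₃) i i) + ((X : M₃) 0 1 • offDiagUnit 0 1 +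
      (X : M₃) 0 2 • offDiagUnit 0 2 + (X : M₃) 1 2 • offDiagUnit 1 2) := by
  have hs := (isSymm X).apply
  ext i j
  fin_cases i <;> fin_cases j <;> simp [single, hs 0 1, hs 0 2, hs 1 2]

lemma eq_offDiag_of_diag_eq_zero {Y : SymR3} (hY : ∀ i, (Y : M₃) i i = 0) :
    Y = (Y : M₃) 0 1 • offDiagUnit 0 1 + (Y : M₃) 0 2 • offDiagUnit 0 2 +
      (Y : M₃) 1 2 • offDiagUnit 1 2 := by
  conv_lhs => rw [eq_diagonal_add Y]
  have hzero : diagonal (fun _ => 0) = 0 := Subtype.ext diagonal_zero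
  simp only [hY, hzero, zero_add]

lemma linearEquiv_ext {φ ψ : SymR3 ≃ₗ[ℝ] SymR3} (hd : ∀ d, φ (diagonal d) = ψ (diagonal d))
    (h01 : φ (offDiagUnit 0 1) = ψ (offDiagUnit 0 1))
    (h02 : φ (offDiagUnit 0 2) = ψ (offDiagUnit 0 2))
    (h12 : φ (offDiagUnit 1 2) = ψ (offDiagUnit 1 2)) : φ = ψ :=
  LinearEquiv.ext fun X => by
    rw [eq_diagonal_add X]
    simp only [map_add, map_smul, hd, h01, h02, h12]

lemma diagonal_eq_sum (d : Fin 3 → ℝ) :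
    diagonal d = d 0 • diagonal (Pi.single 0 1) + d 1 • diagonal (Pi.single 1 1) +
      d 2 • diagonal (Pi.single 2 1) := by
  ext i j
  fin_cases i <;> fin_cases j <;> simp

lemma trace_adjugate_mul_map_eq {α : SymR3 →ₗ[ℝ] SymR3}
    (hα : ∀ X : SymR3, (α X : M₃).det = (X : M₃).det) (X Y : SymR3) :
    ((α X : M₃).adjugate * α Y).trace = ((X : M₃).adjugate * Y).trace := by
  have hcubic (t : ℝ) := hα (X + t • Y)
  simp only [map_add, map_smul, Submodule.coe_add, Submodule.coe_smul, det_add_smul_fin_three,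
    hα X, hα Y] at hcubic
  linarith [hcubic 1, hcubic (-1)]

lemma adjugate_map_eq_zero {α : SymR3 ≃ₗ[ℝ] SymR3}
    (hα : ∀ X : SymR3, (α X : M₃).det = (X : M₃).det) {X : SymR3} (hX : (X : M₃).adjugate = 0) :
    (α X : M₃).adjugate = 0 := by
  have hS : (α X : M₃).adjugate.IsSymm := by
    rw [IsSymm, adjugate_transpose, (isSymm (α X)).eq]
  set S := (α X : M₃).adjugate
  have hpair : (S * S).trace = 0 := by
    have := trace_adjugate_mul_map_eq (α := α.toLinearMap) hα X (α.symm ⟨S, hS⟩)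
    rwa [LinearEquiv.coe_coe, LinearEquiv.apply_symm_apply, hX, Matrix.zero_mul, trace_zero]
      at this
  rw [← trace_conjTranspose_mul_self_eq_zero_iff, conjTranspose_eq_transpose_of_trivial, hS.eq]
  exact hpair

lemma exists_map_diagonal_eq_congruenceHom {α : SymR3 ≃ₗ[ℝ] SymR3}
    (hα : ∀ X : SymR3, (α X : M₃).det = (X : M₃).det) :
    ∃ (A : SpecialLinearGroup (Fin 3) ℝ) (ε : Fin 3 → ℝ), (∀ i, ε i ^ 2 = 1) ∧
      ∀ d, α (diagonal d) = congruenceHom A (diagonal (ε * d)) := by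
  have hrank (i : Fin 3) : ∃ (ε : ℝ) (v : Fin 3 → ℝ), ε ^ 2 = 1 ∧
      (α (diagonal (Pi.single i 1)) : M₃) = ε • vecMulVec v v :=
    exists_eq_smul_vecMulVec_of_adjugate_eq_zero (isSymm _)
      (adjugate_map_eq_zero hα (adjugate_diagonal_single_fin_three i))
  choose ε u hε hu using hrank
  set U : M₃ := of fun r i => u i r
  have hαU (d : Fin 3 → ℝ) : α (diagonal d) = congruence U (diagonal (ε * d)) := by
    have hunit (i : Fin 3) :
        α (diagonal (Pi.single i 1)) = ε i • congruence U (diagonal (Pi.single i 1)) :=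
      Subtype.ext (by simp [hu i, diagonal_single, mul_single_mul_transpose, U])
    rw [diagonal_eq_sum d, diagonal_eq_sum (ε * d)]
    simp only [map_add, map_smul, hunit, smul_smul, Pi.mul_apply, mul_comm]
  have hdetU : U.det ^ 2 = 1 := by
    have h := hα (diagonal 1)
    rw [hαU, det_congruence] at h
    simp only [coe_diagonal, det_diagonal, Fin.prod_univ_three, Pi.one_apply, mul_one] at h
    have hprod : (ε 0 * ε 1 * ε 2) ^ 2 = 1 := by simp only [mul_pow, hε, one_mul]
    have hdet_eq : U.det ^ 2 = ε 0 * ε 1 * ε 2 := by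
      linear_combination (ε 0 * ε 1 * ε 2) * h - U.det ^ 2 * hprod
    nlinarith [sq_nonneg U.det]
  -- Since `det U = ±1` and `3` is odd, `det U • U` has determinant `1` and the same congruence.
  obtain ⟨A, hA⟩ : ∃ A : SpecialLinearGroup (Fin 3) ℝ, (A : M₃) = U.det • U := by
    refine ⟨⟨U.det • U, ?_⟩, rfl⟩
    rw [det_smul, Fintype.card_fin]
    linear_combination (U.det ^ 2 + 1) * hdetU
  refine ⟨A, ε, hε, fun d => Subtype.ext ?_⟩
  rw [hαU, coe_congruenceHom_apply, coe_congruence, hA]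
  simp only [transpose_smul, Matrix.smul_mul, Matrix.mul_smul, smul_smul, ← sq, hdetU, one_smul]

section DiagonalNormalForm

variable {β : SymR3 ≃ₗ[ℝ] SymR3} (hβ : ∀ X : SymR3, (β X : M₃).det = (X : M₃).det)
  {ε : Fin 3 → ℝ} (hβd : ∀ d, β (diagonal d) = diagonal (ε * d))
include hβ hβd

lemma map_diag_eq_zero (hne : ∀ i, ε i ≠ 0) {Y : SymR3} (hY : ∀ i, (Y : M₃) i i = 0)
    (i : Fin 3) : (β Y : M₃) i i = 0 := by
  have hpair := trace_adjugate_mul_map_eq (α := β.toLinearMap) hβ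
    (diagonal fun j => if j = i then 0 else 1) Y
  fin_cases i <;> simpa [-adjugate_diagonal, adjugate_fin_three, hβd, trace_fin_three, vecMul,
    dotProduct, Fin.sum_univ_three, hY, hne] using hpair

lemma map_offDiag_sq_eq (hne : ∀ i, ε i ≠ 0) {Y : SymR3} (hY : ∀ i, (Y : M₃) i i = 0) :
    ε 0 * (β Y : M₃) 1 2 ^ 2 = (Y : M₃) 1 2 ^ 2 ∧
    ε 1 * (β Y : M₃) 0 2 ^ 2 = (Y : M₃) 0 2 ^ 2 ∧
    ε 2 * (β Y : M₃) 0 1 ^ 2 = (Y : M₃) 0 1 ^ 2 ∧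
    (β Y : M₃) 0 1 * (β Y : M₃) 0 2 * (β Y : M₃) 1 2 =
      (Y : M₃) 0 1 * (Y : M₃) 0 2 * (Y : M₃) 1 2 := by
  -- compare the coefficients of `1, d 0, d 1, d 2` in
  -- `det (diagonal (ε * d) + β Y) = det (diagonal d + Y)`
  have hdet (d : Fin 3 → ℝ) := hβ (diagonal d + Y)
  simp only [map_add, hβd, Submodule.coe_add, coe_diagonal,
    det_diagonal_add_of_isSymm_of_diag_eq_zero _ (isSymm _) hY,
    det_diagonal_add_of_isSymm_of_diag_eq_zero _ (isSymm _) (map_diag_eq_zero hβ hβd hne hY)]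
    at hdet
  have h0 := hdet 0
  have h1 := hdet ![1, 0, 0]
  have h2 := hdet ![0, 1, 0]
  have h3 := hdet ![0, 0, 1]
  simp only [Pi.mul_apply, Pi.zero_apply, cons_val_zero, cons_val_one, cons_val, mul_zero, zero_mul,
    mul_one, one_mul, zero_add, sub_zero] at h0 h1 h2 h3
  refine ⟨by linarith, by linarith, by linarith, by linarith⟩

lemma map_offDiagUnit (hne : ∀ i, ε i ≠ 0) {i j k : Fin 3} (hij : i ≠ j) (hik : i ≠ k)
    (hjk : j < k) :
    β (offDiagUnit j k) = (β (offDiagUnit j k) : M₃) j k • offDiagUnit j k ∧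
      ε i * (β (offDiagUnit j k) : M₃) j k ^ 2 = 1 := by
  have hdiag : ∀ l, (offDiagUnit j k : M₃) l l = 0 := fun l => by
    have := hjk.ne
    simp only [coe_offDiagUnit, Matrix.add_apply, single_apply]
    grind
  have hβdiag := map_diag_eq_zero hβ hβd hne hdiag
  obtain ⟨h12, h02, h01, -⟩ := map_offDiag_sq_eq hβ hβd hne hdiag
  refine ⟨?_, ?_⟩
  · rw [eq_offDiag_of_diag_eq_zero hβdiag]
    fin_cases i <;> fin_cases j <;> fin_cases k <;> simp_all [single]
  · fin_cases i <;> fin_cases j <;> fin_cases k <;> simp_all [single]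

lemma mem_range_congruenceHom_of_map_diagonal (hε : ∀ i, ε i ^ 2 = 1) :
    β ∈ Set.range congruenceHom := by
  have hne (i : Fin 3) : ε i ≠ 0 := by
    intro h
    simpa [h] using hε i
  obtain ⟨h01, hσ₀₁⟩ := map_offDiagUnit hβ hβd hne (i := 2) (j := 0) (k := 1) (by decide)
    (by decide) (by decide)
  obtain ⟨h02, hσ₀₂⟩ := map_offDiagUnit hβ hβd hne (i := 1) (j := 0) (k := 2) (by decide)
    (by decide) (by decide)
  obtain ⟨h12, hσ₁₂⟩ := map_offDiagUnit hβ hβd hne (i := 0) (j := 1) (k := 2) (by decide)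
    (by decide) (by decide)
  set σ₀₁ := (β (offDiagUnit 0 1) : M₃) 0 1
  set σ₀₂ := (β (offDiagUnit 0 2) : M₃) 0 2
  set σ₁₂ := (β (offDiagUnit 1 2) : M₃) 1 2
  have hprod : σ₀₁ * σ₀₂ * σ₁₂ = 1 := by
    have hdiag (l : Fin 3) :
        ((offDiagUnit 0 1 + offDiagUnit 0 2 + offDiagUnit 1 2 : SymR3) : M₃) l l = 0 := by
      fin_cases l <;> simp [single]
    have := (map_offDiag_sq_eq hβ hβd hne hdiag).2.2.2
    simpa [map_add, h01, h02, h12, single] using this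
  have hε1 : ε = 1 := by
    funext i
    fin_cases i
    · show ε 0 = 1
      nlinarith [hε 0, sq_nonneg σ₁₂]
    · show ε 1 = 1
      nlinarith [hε 1, sq_nonneg σ₀₂]
    · show ε 2 = 1
      nlinarith [hε 2, sq_nonneg σ₀₁]
  simp only [hε1, Pi.one_apply, one_mul] at hσ₁₂ hσ₀₂ hσ₀₁
  -- `diag (σ₁₂, σ₀₂, σ₀₁)` scales `offDiagUnit j k` by `σⱼₖ`, as `σᵢⱼ² = 1` and `σ₀₁ σ₀₂ σ₁₂ = 1`
  have hdetC : (Matrix.diagonal ![σ₁₂, σ₀₂, σ₀₁]).det = 1 := by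
    rw [det_diagonal, Fin.prod_univ_three, ← hprod]
    simp only [cons_val_zero, cons_val_one, cons_val_two, head_cons, tail_cons]
    ring
  obtain ⟨C, hC⟩ : ∃ C : SpecialLinearGroup (Fin 3) ℝ,
      (C : M₃) = Matrix.diagonal ![σ₁₂, σ₀₂, σ₀₁] := ⟨⟨_, hdetC⟩, rfl⟩
  refine ⟨C, linearEquiv_ext ?_ ?_ ?_ ?_⟩ <;>
    intros <;> ext i j <;> fin_cases i <;> fin_cases j <;>
    simp [coe_congruenceHom_apply, hC, hβd, h01, h02, h12, hε1, single] <;> grind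

end DiagonalNormalForm

lemma det_map_eq_iff_mem_range_congruenceHom (α : SymR3 ≃ₗ[ℝ] SymR3) :
    (∀ X : SymR3, (α X : M₃).det = (X : M₃).det) ↔ α ∈ Set.range congruenceHom := by
  refine ⟨fun hα => ?_, by rintro ⟨A, rfl⟩; exact det_congruenceHom A⟩
  obtain ⟨A, ε, hε, hαd⟩ := exists_map_diagonal_eq_congruenceHom hα
  set β := α.trans (congruenceHom A).symm
  have hαβ (X : SymR3) : congruenceHom A (β X) = α X := (congruenceHom A).apply_symm_apply _
  have hβ (X : SymR3) : (β X : M₃).det = (X : M₃).det := by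
    rw [← det_congruenceHom A, hαβ, hα]
  have hβd (d : Fin 3 → ℝ) : β (diagonal d) = diagonal (ε * d) := by
    simp [β, hαd]
  obtain ⟨C, hC⟩ := mem_range_congruenceHom_of_map_diagonal hβ hβd hε
  refine ⟨A * C, LinearEquiv.ext fun X => ?_⟩
  rw [map_mul, hC, LinearEquiv.mul_apply, hαβ]

end SymR3

/-- the map `A ↦ (X ↦ A X ᵗA)` is a well-defined group isomorphism from
`SL(3,ℝ)` onto `E₆₍₋₂₆₎,ℝ`, the group of ℝ-linear automorphisms of `J(3,ℝ)` preserving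
the determinant. -/
theorem stmt_5 :
    ∃ f : Matrix.SpecialLinearGroup (Fin 3) ℝ →* (SymR3 ≃ₗ[ℝ] SymR3),
      (∀ (A : Matrix.SpecialLinearGroup (Fin 3) ℝ) (X : SymR3),
          ((f A) X : Matrix (Fin 3) (Fin 3) ℝ) =
            (A : Matrix (Fin 3) (Fin 3) ℝ) * (X : Matrix (Fin 3) (Fin 3) ℝ) *
              (A : Matrix (Fin 3) (Fin 3) ℝ)ᵀ) ∧
      Function.Injective f ∧
      (∀ α : SymR3 ≃ₗ[ℝ] SymR3,
        (∀ X : SymR3, ((α X : Matrix (Fin 3) (Fin 3) ℝ)).det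
            = ((X : Matrix (Fin 3) (Fin 3) ℝ)).det) ↔ α ∈ Set.range f) :=
  ⟨SymR3.congruenceHom, SymR3.coe_congruenceHom_apply, SymR3.congruenceHom_injective,
    SymR3.det_map_eq_iff_mem_range_congruenceHom⟩
end
end

section
/- Let X ∈ J(3,ℂ^C) satisfy X∘X = X and tr(X) = 1. Then for each i ∈ {1,2,3} there exists B ∈ U(3,ℂ^C) such that B*·X·B = E_i. -/
open Matrix TensorProduct

noncomputable section

/-- `𝔄 = ℂ ⊗_ℝ ℂ`, regarded as an algebra over the scalar field `ℂ` acting through the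
first tensor factor. -/
abbrev CC : Type := ℂ ⊗[ℝ] ℂ

/-- `e₁`, the imaginary unit of the non-scalar tensor factor. -/
def e1 : CC := (1 : ℂ) ⊗ₜ[ℝ] Complex.I

/-- The conjugation `x ↦ x̄` of `𝔄`: the `ℂ`-linear ring involution with `ē₁ = −e₁`. -/
def barA : CC →ₐ[ℂ] CC :=
  Algebra.TensorProduct.map (AlgHom.id ℂ ℂ) Complex.conjAe.toAlgHom

/-- `τ`: the conjugate-linear ring involution of `𝔄` fixing the non-scalar factor. -/
def tauA : CC →ₐ[ℝ] CC :=
  Algebra.TensorProduct.map Complex.conjAe.toAlgHom (AlgHom.id ℝ ℂ)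

abbrev MCC : Type := Matrix (Fin 3) (Fin 3) CC

/-- `A* = ᵗĀ`. -/
def ctransA (M : MCC) : MCC := (M.map barA)ᵀ

lemma map_barA_add (M N : MCC) : (M + N).map barA = M.map barA + N.map barA :=
  Matrix.map_add _ (fun a b => map_add barA a b) M N

lemma map_barA_smul (c : ℂ) (M : MCC) : (c • M).map barA = c • (M.map barA) := by
  ext i j
  simp only [Matrix.map_apply, Matrix.smul_apply]
  exact _root_.map_smul barA c (M i j)

/-- `J(3,ℂ^C)`: the 9-dimensional `C`-vector space of 3×3 `bar`-Hermitian matrices over `𝔄`. -/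
def J3CC : Submodule ℂ MCC where
  carrier := {X | (X.map barA)ᵀ = X}
  add_mem' := fun {a b} ha hb => by
    simp only [Set.mem_setOf_eq] at *
    rw [map_barA_add, Matrix.transpose_add, ha, hb]
  zero_mem' := by
    simp only [Set.mem_setOf_eq]
    have : (0 : MCC).map barA = 0 := Matrix.map_zero _ (map_zero barA)
    rw [this, Matrix.transpose_zero]
  smul_mem' := fun c a ha => by
    simp only [Set.mem_setOf_eq] at *
    rw [map_barA_smul, Matrix.transpose_smul, ha]

/-- The Jordan product `X∘Y = (XY + YX)/2`. -/
def jmul (M N : MCC) : MCC := (2⁻¹ : ℂ) • (M * N + N * M)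

/-- The Freudenthal determinant on `J(3,ℂ^C)` (given by the explicit formula). -/
def detA (X : MCC) : CC :=
  X 0 0 * X 1 1 * X 2 2 + X 1 2 * X 2 0 * X 0 1
    + barA (X 1 2) * barA (X 2 0) * barA (X 0 1)
    - X 0 0 * (X 1 2 * barA (X 1 2)) - X 1 1 * (X 2 0 * barA (X 2 0))
    - X 2 2 * (X 0 1 * barA (X 0 1))

lemma map_barA_mul (M N : MCC) : (M * N).map barA = M.map barA * N.map barA := by
  ext i j
  simp [Matrix.map_apply, Matrix.mul_apply, map_sum]

lemma jmul_mem {X Y : MCC} (hX : (X.map barA)ᵀ = X) (hY : (Y.map barA)ᵀ = Y) :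
    ((jmul X Y).map barA)ᵀ = jmul X Y := by
  have hmul : ∀ M N : MCC, ((M * N).map barA)ᵀ = (N.map barA)ᵀ * (M.map barA)ᵀ := by
    intro M N
    rw [map_barA_mul, Matrix.transpose_mul]
  rw [jmul, map_barA_smul, Matrix.transpose_smul, map_barA_add, Matrix.transpose_add,
    hmul, hmul, hX, hY, add_comm]

/-- The Jordan product as an operation on `J(3,ℂ^C)`. -/
def jordanJ (X Y : J3CC) : J3CC := ⟨jmul X Y, jmul_mem X.2 Y.2⟩

/-- The identity matrix as an element of `J(3,ℂ^C)`. -/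
def EJ : J3CC :=
  ⟨1, by
    show ((1 : MCC).map barA)ᵀ = 1
    have : (1 : MCC).map barA = 1 := Matrix.map_one _ (map_zero barA) (map_one barA)
    rw [this, Matrix.transpose_one]⟩

/-! `𝔄 ≅ ℂ × ℂ` through the characters `a ⊗ b ↦ a b` and `a ⊗ b ↦ a b̄`, and the bar
involution swaps the two factors. Hence a bar-Hermitian `X` is a pair `(P, Pᵀ)` of complex
matrices, `X ∘ X = X` and `tr X = 1` say that `P` is an idempotent of trace one, and the pairs
`(U, (U⁻¹)ᵀ)` with `U ∈ GL(3, ℂ)` belong to `U(3, ℂ^C)`. An idempotent of trace one has rank one,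
so it is similar to every `E_i`. -/

open Module

theorem LinearMap.exists_basis_toMatrix_eq_single {K V ι : Type*} [Field K] [AddCommGroup V]
    [Module K V] [FiniteDimensional K V] [Fintype ι] [DecidableEq ι] {f : V →ₗ[K] V}
    (hf : IsIdempotentElem f) (hr : finrank K f.range = 1)
    (hV : finrank K V = Fintype.card ι) (i : ι) :
    ∃ b : Basis ι K V, LinearMap.toMatrix b b f = Matrix.single i i 1 := by
  have hproj := LinearMap.IsIdempotentElem.isProj_range f hf
  have hk : finrank K f.ker = Fintype.card {j // j ≠ i} := by
    have := f.finrank_range_add_finrank_ker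
    rw [Fintype.card_subtype_compl, Fintype.card_subtype_eq]
    omega
  let bR : Basis {j // j = i} K f.range := basisUnique _ hr
  let bK : Basis {j // j ≠ i} K f.ker :=
    (finBasisOfFinrankEq K _ hk).reindex (Fintype.equivFin _).symm
  let b : Basis ι K V :=
    ((bR.prod bK).map (Submodule.prodEquivOfIsCompl _ _ hproj.isCompl)).reindex
      (Equiv.sumCompl (· = i))
  have hb : ∀ j, f (b j) = if j = i then b j else 0 := by
    refine (Equiv.sumCompl (· = i)).surjective.forall.2 ?_
    rintro (⟨j, rfl⟩ | ⟨j, hj⟩)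
    · simpa [b] using hproj.map_id _ (bR _).2
    · simp [b, hj]
  refine ⟨b, ?_⟩
  ext k j
  rw [LinearMap.toMatrix_apply, hb]
  by_cases hj : j = i <;> simp [hj, Ne.symm, Matrix.single_apply, Finsupp.single_apply]

theorem Matrix.exists_units_inv_mul_mul_eq_single {K n : Type*} [Field K] [CharZero K]
    [Fintype n] [DecidableEq n] {P : Matrix n n K} (hP : IsIdempotentElem P)
    (htr : P.trace = 1) (i : n) :
    ∃ U : (Matrix n n K)ˣ, (↑U⁻¹ : Matrix n n K) * P * (U : Matrix n n K) = single i i 1 := by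
  let e := Pi.basisFun K n
  have hf : IsIdempotentElem (Matrix.toLin e e P) := hP.map (Matrix.toLinAlgEquiv e)
  have hr : finrank K (Matrix.toLin e e P).range = 1 := by
    have := (LinearMap.IsIdempotentElem.isProj_range _ hf).trace
    rw [Matrix.trace_toLin_eq, htr] at this
    exact_mod_cast this.symm
  obtain ⟨b, hb⟩ :=
    LinearMap.exists_basis_toMatrix_eq_single hf hr (finrank_fintype_fun_eq_card K) i
  refine ⟨⟨e.toMatrix b, b.toMatrix e, e.toMatrix_mul_toMatrix_flip b,
    b.toMatrix_mul_toMatrix_flip e⟩, ?_⟩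
  rw [Units.inv_mk, Units.val_mk, Units.val_mk, ← hb,
    ← basis_toMatrix_mul_linearMap_toMatrix_mul_basis_toMatrix b e b e, LinearMap.toMatrix_toLin]

lemma jmul_self (M : MCC) : jmul M M = M * M := by
  rw [jmul, ← two_smul ℂ, smul_smul, inv_mul_cancel₀ two_ne_zero, one_smul]

namespace CC

def fst : CC →ₐ[ℂ] ℂ :=
  Algebra.TensorProduct.lift (AlgHom.id ℂ ℂ) (AlgHom.id ℝ ℂ) fun _ _ => Commute.all _ _

def snd : CC →ₐ[ℂ] ℂ :=
  Algebra.TensorProduct.lift (AlgHom.id ℂ ℂ) Complex.conjAe.toAlgHom fun _ _ => Commute.all _ _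

@[simp] lemma fst_tmul (a b : ℂ) : fst (a ⊗ₜ b) = a * b := by
  simp [fst]

@[simp] lemma snd_tmul (a b : ℂ) : snd (a ⊗ₜ b) = a * starRingEnd ℂ b := by
  simp [snd, Complex.conjAe]

lemma fst_comp_barA : fst.comp barA = snd := by
  ext
  simp [barA, Complex.conjAe]

lemma snd_comp_barA : snd.comp barA = fst := by
  ext
  simp [barA, Complex.conjAe]

lemma fst_prod_snd_surjective : Function.Surjective (fst.prod snd) := by
  rintro ⟨a, b⟩
  refine ⟨((a + b) / 2) ⊗ₜ 1 + ((a - b) / (2 * Complex.I)) ⊗ₜ Complex.I, ?_⟩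
  ext <;> simp <;> field_simp <;> ring

lemma fst_prod_snd_injective : Function.Injective (fst.prod snd) := by
  have h : finrank ℂ CC = finrank ℂ (ℂ × ℂ) := by
    rw [finrank_baseChange, Complex.finrank_real_complex, finrank_prod, finrank_self]
  exact (LinearMap.injective_iff_surjective_of_finrank_eq_finrank h
    (f := (fst.prod snd).toLinearMap)).2 fst_prod_snd_surjective

variable {n : Type*} [Fintype n] [DecidableEq n]

lemma matrix_ext {M N : Matrix n n CC} (h₁ : fst.mapMatrix M = fst.mapMatrix N)
    (h₂ : snd.mapMatrix M = snd.mapMatrix N) : M = N := by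
  ext k j
  exact fst_prod_snd_injective (Prod.ext congr($h₁ k j) congr($h₂ k j))

lemma exists_fst_snd_mapMatrix_eq (P Q : Matrix n n ℂ) :
    ∃ B : Matrix n n CC, fst.mapMatrix B = P ∧ snd.mapMatrix B = Q := by
  choose x hx using fun k j => fst_prod_snd_surjective (P k j, Q k j)
  exact ⟨Matrix.of x, by ext k j; simpa using congr_arg Prod.fst (hx k j),
    by ext k j; simpa using congr_arg Prod.snd (hx k j)⟩

lemma fst_mapMatrix_ctransA (M : MCC) : fst.mapMatrix (ctransA M) = (snd.mapMatrix M)ᵀ := by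
  ext k j
  simp [ctransA, ← fst_comp_barA]

lemma snd_mapMatrix_ctransA (M : MCC) : snd.mapMatrix (ctransA M) = (fst.mapMatrix M)ᵀ := by
  ext k j
  simp [ctransA, ← snd_comp_barA]

end CC

/-- any `X ∈ J(3,ℂ^C)` with `X∘X = X` and `tr X = 1` can be transformed to
each diagonal matrix unit `E_i` by some `B ∈ U(3,ℂ^C)`:  `B* X B = E_i`. -/
theorem stmt_6 (X : MCC) (hX : (X.map barA)ᵀ = X)
    (hidem : jmul X X = X) (htr : X.trace = 1) :
    ∀ i : Fin 3, ∃ B : MCC, B * ctransA B = 1 ∧ ctransA B * X * B = Matrix.single i i 1 := by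
  intro i
  have hXX : IsIdempotentElem X := (jmul_self X).symm.trans hidem
  set P := CC.fst.mapMatrix X
  have hP : IsIdempotentElem P := hXX.map CC.fst.mapMatrix
  have htrP : P.trace = 1 := by
    rw [← CC.fst.map_one, ← htr, AddMonoidHom.map_trace]
    rfl
  have hQ : CC.snd.mapMatrix X = Pᵀ := by
    rw [← CC.snd_mapMatrix_ctransA, ctransA, hX]
  obtain ⟨U, hU⟩ := exists_units_inv_mul_mul_eq_single hP htrP i
  obtain ⟨B, hB₁, hB₂⟩ := CC.exists_fst_snd_mapMatrix_eq
    (U : Matrix (Fin 3) (Fin 3) ℂ) (↑U⁻¹ : Matrix (Fin 3) (Fin 3) ℂ)ᵀ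
  refine ⟨B, CC.matrix_ext ?_ ?_, CC.matrix_ext ?_ ?_⟩
  · rw [map_mul, map_one, CC.fst_mapMatrix_ctransA, hB₁, hB₂, transpose_transpose, Units.mul_inv]
  · rw [map_mul, map_one, CC.snd_mapMatrix_ctransA, hB₁, hB₂, ← transpose_mul, Units.mul_inv,
      transpose_one]
  · rw [map_mul, map_mul, CC.fst_mapMatrix_ctransA, hB₁, hB₂, transpose_transpose, hU]
    simp
  · rw [map_mul, map_mul, CC.snd_mapMatrix_ctransA, hB₁, hB₂, hQ, ← transpose_mul,
      ← transpose_mul, ← mul_assoc, hU, transpose_single]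
    simp
end
end
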